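/- arXiv:1612.03547 — 3 statements merged into one kernel-verified Lean document; each statement's English description precedes it below -/
import Mathlib

section
/- Let x₀ ∈ ℝⁿ, η ∈ ℝᵐ, b_i = |⟨a_i, x₀⟩| + η_i, η⁻ = min(η, 0), η⁺ = max(η, 0), Ω⁻ = {i : η_i < 0}, Ω⁺ = {i : η_i > 0}, Ω = Ω⁺ ∪ Ω⁻. If (x₀ + h, −η⁻ + g) is feasible for the constraints −b_i − e_i ≤ ⟨a_i, x⟩ ≤ b_i + e_i, e_i ≥ 0 (i = 1,…,m), then sign(⟨a_i, x₀⟩)·⟨a_i, h⟩ ≤ g_i for every i ∈ Ωᶜ ∪ Ω⁻, and g_i ≥ 0 for every i ∈ Ωᶜ ∪ Ω⁺. -/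
/-!
Write `s = ⟨aᵢ, x₀⟩`, `t = ⟨aᵢ, h⟩` and `e = -min(ηᵢ, 0) + gᵢ`. Feasibility says
`|s + t| ≤ |s| + ηᵢ + e` and `0 ≤ e`. For `ηᵢ ≤ 0` this is `|s + t| ≤ |s| + gᵢ`, and comparing
`s + t` with `s` on the side of the sign of `s` gives `sign(s) t ≤ gᵢ`. For `ηᵢ ≥ 0` the
constraint `0 ≤ e` is `0 ≤ gᵢ`.
-/

theorem Real.sign_mul_le_of_abs_add_le {s t g : ℝ} (h : |s + t| ≤ |s| + g) :
    Real.sign s * t ≤ g := by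
  obtain ⟨hlo, hhi⟩ := abs_le.mp h
  rcases lt_trichotomy s 0 with hs | rfl | hs
  · rw [Real.sign_of_neg hs]
    rw [abs_of_neg hs] at hlo
    linarith
  · rw [Real.sign_zero, zero_mul]
    simpa using (abs_nonneg _).trans h
  · rw [Real.sign_of_pos hs]
    rw [abs_of_pos hs] at hhi
    linarith

/-- Let `bᵢ = |⟨aᵢ, x₀⟩| + ηᵢ`, `η⁻ = min(η,0)`, `Ω⁻ = {i : ηᵢ < 0}`,
`Ω⁺ = {i : ηᵢ > 0}`, `Ω = Ω⁺ ∪ Ω⁻`.  If `(x₀ + h, −η⁻ + g)` is feasible for the constraints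
`−bᵢ − eᵢ ≤ ⟨aᵢ, x⟩ ≤ bᵢ + eᵢ`, `eᵢ ≥ 0`, then `sign(⟨aᵢ, x₀⟩) ⟨aᵢ, h⟩ ≤ gᵢ` for every
`i ∈ Ωᶜ ∪ Ω⁻`, and `gᵢ ≥ 0` for every `i ∈ Ωᶜ ∪ Ω⁺`. -/
theorem stmt_3 (n m : ℕ) (a : Fin m → Fin n → ℝ) (x₀ h : Fin n → ℝ)
    (η g : Fin m → ℝ)
    (hfeas : ∀ i,
      (-( |∑ j, a i j * x₀ j| + η i) - (-(min (η i) 0) + g i) ≤ ∑ j, a i j * (x₀ j + h j) ∧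
        ∑ j, a i j * (x₀ j + h j) ≤ (|∑ j, a i j * x₀ j| + η i) + (-(min (η i) 0) + g i)) ∧
      0 ≤ -(min (η i) 0) + g i) :
    (∀ i, (η i = 0 ∨ η i < 0) →
      Real.sign (∑ j, a i j * x₀ j) * (∑ j, a i j * h j) ≤ g i) ∧
    (∀ i, (η i = 0 ∨ 0 < η i) → 0 ≤ g i) := by
  constructor
  · intro i hi
    obtain ⟨⟨hlo, hhi⟩, -⟩ := hfeas i
    have hmin : min (η i) 0 = η i := min_eq_left (hi.elim le_of_eq le_of_lt)
    simp only [mul_add, Finset.sum_add_distrib, hmin] at hlo hhi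
    exact Real.sign_mul_le_of_abs_add_le (abs_le.mpr ⟨by linarith, by linarith⟩)
  · intro i hi
    have hmin : min (η i) 0 = 0 := min_eq_right (hi.elim ge_of_eq le_of_lt)
    simpa [hmin] using (hfeas i).2
end

section
/- Let a = (a₁, a₂) be a pair of independent standard normal random variables and let θ ∈ ℝ. Then E[ 𝟙_{a₁² + a₂² ≤ 9} · |a₁·(a₁ cos θ + a₂ sin θ)| ] = ((2 − 11e^{−9/2})/(2π)) · ∫₀^{2π} |cos φ · cos(θ − φ)| dφ, and this quantity is at least (2 − 11e^{−9/2})/π. -/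
/-!
In polar coordinates the standard Gaussian density is `(2π)⁻¹ e^{-r²/2}` and the integrand is
`𝟙_{r ≤ 3} r² |cos φ cos (θ - φ)|`, so the expectation factors into the radial integral
`(2π)⁻¹ ∫₀³ r³ e^{-r²/2} dr = (2 - 11 e^{-9/2}) / (2π)` times the angular integral. For the lower
bound, `|cos φ cos (θ - φ)| + |sin φ sin (θ - φ)| ≥ |cos (2φ - θ)|`, and the second summand is the
first one shifted by `π/2`, so twice the angular integral is at least `∫₀^{2π} |cos (2φ - θ)| = 4`.
-/

open MeasureTheory ProbabilityTheory Real Set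

theorem periodic_abs_cos : Function.Periodic (fun x => |cos x|) π := fun x => by
  simp [cos_add_pi]

theorem integral_abs_cos_add_pi (t : ℝ) : ∫ x in t..t + π, |cos x| = 2 := by
  rw [periodic_abs_cos.intervalIntegral_add_eq t (-(π / 2)), show -(π / 2) + π = π / 2 by ring,
    intervalIntegral.integral_congr (g := cos), integral_cos]
  · norm_num
  · intro x hx
    rw [uIcc_of_le (by linarith [pi_pos])] at hx
    exact abs_of_nonneg (cos_nonneg_of_mem_Icc hx)

theorem integral_abs_cos_two_mul_sub (θ : ℝ) : ∫ φ in 0..2 * π, |cos (2 * φ - θ)| = 4 := by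
  rw [intervalIntegral.integral_comp_mul_sub (fun x => |cos x|) two_ne_zero θ,
    show 2 * (2 * π) - θ = 2 * 0 - θ + (4 : ℤ) • π by simp; ring,
    periodic_abs_cos.intervalIntegral_add_zsmul_eq 4 _
      fun a b => continuous_cos.abs.intervalIntegrable a b,
    integral_abs_cos_add_pi]
  norm_num

theorem integral_comp_add_eq_of_periodic {f : ℝ → ℝ} {T : ℝ} (hf : Function.Periodic f T)
    (t s : ℝ) : ∫ x in t..t + T, f (x + s) = ∫ x in t..t + T, f x := by
  rw [intervalIntegral.integral_comp_add_right, show t + T + s = t + s + T by ring,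
    hf.intervalIntegral_add_eq]

theorem periodic_abs_cos_mul_cos_sub (θ : ℝ) :
    Function.Periodic (fun φ => |cos φ * cos (θ - φ)|) (2 * π) := fun φ => by
  simp only [cos_add_two_pi, show θ - (φ + 2 * π) = θ - φ - 2 * π by ring, cos_sub_two_pi]

theorem two_le_integral_abs_cos_mul_cos_sub (θ : ℝ) :
    2 ≤ ∫ φ in 0..2 * π, |cos φ * cos (θ - φ)| := by
  set f : ℝ → ℝ := fun φ => |cos φ * cos (θ - φ)|
  have hf : Continuous f := by fun_prop
  have hpt : ∀ φ, |cos (2 * φ - θ)| ≤ f φ + f (φ + π / 2) := fun φ => by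
    have hcos : cos (2 * φ - θ) =
        cos φ * cos (θ - φ) - cos (φ + π / 2) * cos (θ - (φ + π / 2)) := by
      rw [cos_add_pi_div_two, show θ - (φ + π / 2) = θ - φ - π / 2 by ring, cos_sub_pi_div_two,
        show 2 * φ - θ = φ - (θ - φ) by ring, cos_sub]
      ring
    rw [hcos]
    exact abs_sub _ _
  have hshift := integral_comp_add_eq_of_periodic (periodic_abs_cos_mul_cos_sub θ) 0 (π / 2)
  rw [zero_add] at hshift
  have hg : Continuous fun φ => f (φ + π / 2) := hf.comp (continuous_add_const _)
  have hmono : ∫ φ in 0..2 * π, |cos (2 * φ - θ)| ≤ ∫ φ in 0..2 * π, (f φ + f (φ + π / 2)) :=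
    intervalIntegral.integral_mono_on (by positivity)
      ((by fun_prop : Continuous fun φ => |cos (2 * φ - θ)|).intervalIntegrable _ _)
      ((hf.add hg).intervalIntegrable _ _) fun φ _ => hpt φ
  rw [integral_abs_cos_two_mul_sub, intervalIntegral.integral_add (hf.intervalIntegrable _ _)
    (hg.intervalIntegrable _ _), hshift] at hmono
  linarith

theorem integral_prod_gaussianReal_zero_one {E : Type*} [NormedAddCommGroup E] [NormedSpace ℝ E]
    (f : ℝ × ℝ → E) :
    ∫ z, f z ∂(gaussianReal 0 1).prod (gaussianReal 0 1) =
      ∫ z, ((2 * π)⁻¹ * exp (-(z.1 ^ 2 + z.2 ^ 2) / 2)) • f z := by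
  rw [gaussianReal_of_var_ne_zero 0 one_ne_zero,
    prod_withDensity (measurable_gaussianPDF 0 1) (measurable_gaussianPDF 0 1),
    ← Measure.volume_eq_prod, integral_withDensity_eq_integral_toReal_smul
      (by fun_prop : Measurable fun z : ℝ × ℝ => gaussianPDF 0 1 z.1 * gaussianPDF 0 1 z.2)
      (.of_forall fun _ => ENNReal.mul_lt_top ENNReal.ofReal_lt_top ENNReal.ofReal_lt_top)]
  congr with z
  rw [gaussianPDF, gaussianPDF, ENNReal.toReal_mul,
    ENNReal.toReal_ofReal (gaussianPDFReal_nonneg _ _ _),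
    ENNReal.toReal_ofReal (gaussianPDFReal_nonneg _ _ _), gaussianPDFReal, gaussianPDFReal]
  congr 1
  simp only [NNReal.coe_one, mul_one, sub_zero]
  rw [mul_mul_mul_comm, ← mul_inv, mul_self_sqrt (by positivity), ← exp_add]
  ring_nf

theorem integral_eq_mul_of_polarCoord {f : ℝ × ℝ → ℝ} (g h : ℝ → ℝ)
    (hf : ∀ r > 0, ∀ φ, r * f (r * cos φ, r * sin φ) = g r * h φ) :
    ∫ z, f z = (∫ r in Ioi (0 : ℝ), g r) * ∫ φ in Ioo (-π) π, h φ := by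
  rw [← integral_prod_mul, Measure.prod_restrict, ← Measure.volume_eq_prod, ← polarCoord_target,
    ← integral_comp_polarCoord_symm]
  refine setIntegral_congr_fun polarCoord.open_target.measurableSet fun p hp => ?_
  rw [polarCoord_symm_apply, smul_eq_mul, hf p.1 hp.1]

theorem integral_pow_three_mul_exp_neg_sq_div_two (R : ℝ) :
    ∫ r in 0..R, r ^ 3 * exp (-r ^ 2 / 2) = 2 - (R ^ 2 + 2) * exp (-R ^ 2 / 2) := by
  have hderiv : ∀ x ∈ uIcc 0 R, HasDerivAt (fun r => -(r ^ 2 + 2) * exp (-r ^ 2 / 2))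
      (x ^ 3 * exp (-x ^ 2 / 2)) x := fun x _ => by
    have := ((((hasDerivAt_id' x).fun_pow 2).add_const 2).fun_neg).fun_mul
      ((((hasDerivAt_id' x).fun_pow 2).fun_neg.div_const 2).exp)
    refine this.congr_deriv ?_
    push_cast
    ring
  rw [intervalIntegral.integral_eq_sub_of_hasDerivAt hderiv
    (Continuous.intervalIntegrable (by fun_prop) _ _)]
  simp only [ne_eq, OfNat.ofNat_ne_zero, not_false_eq_true, zero_pow, neg_zero, zero_div, exp_zero]
  ring

theorem Function.Periodic.setIntegral_Ioo_neg_pi_pi {f : ℝ → ℝ}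
    (hf : Function.Periodic f (2 * π)) :
    ∫ x in Ioo (-π) π, f x = ∫ x in 0..2 * π, f x := by
  have h := hf.intervalIntegral_add_eq (-π) 0
  rw [show -π + 2 * π = π by ring, zero_add] at h
  rw [← integral_Ioc_eq_integral_Ioo, ← intervalIntegral.integral_of_le (by linarith [pi_pos]), h]

theorem setIntegral_Ioi_indicator_Iic_pow_three_mul_exp {R : ℝ} (hR : 0 ≤ R) :
    ∫ r in Ioi 0, (Iic R).indicator (fun r => r ^ 3 * exp (-r ^ 2 / 2)) r =
      2 - (R ^ 2 + 2) * exp (-R ^ 2 / 2) := by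
  rw [setIntegral_indicator measurableSet_Iic, Ioi_inter_Iic,
    ← intervalIntegral.integral_of_le hR, integral_pow_three_mul_exp_neg_sq_div_two]

theorem two_sub_eleven_mul_exp_pos : 0 < 2 - 11 * exp (-9 / 2) := by
  have := add_one_lt_exp (x := 9 / 2) (by norm_num)
  rw [show (-9 : ℝ) / 2 = -(9 / 2) by ring, exp_neg, sub_pos, ← div_eq_mul_inv,
    div_lt_iff₀ (exp_pos _)]
  linarith

theorem integral_indicator_mul_abs_prod_gaussianReal (θ : ℝ) :
    ∫ a : ℝ × ℝ, (if a.1 ^ 2 + a.2 ^ 2 ≤ 9 then (1 : ℝ) else 0) *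
        |a.1 * (a.1 * cos θ + a.2 * sin θ)| ∂(gaussianReal 0 1).prod (gaussianReal 0 1) =
      (2 - 11 * exp (-9 / 2)) / (2 * π) * ∫ φ in 0..2 * π, |cos φ * cos (θ - φ)| := by
  have hpolar : ∀ r > (0 : ℝ), ∀ φ, r * (((2 * π)⁻¹ *
      exp (-((r * cos φ) ^ 2 + (r * sin φ) ^ 2) / 2)) •
        ((if (r * cos φ) ^ 2 + (r * sin φ) ^ 2 ≤ 9 then (1 : ℝ) else 0) *
          |r * cos φ * (r * cos φ * cos θ + r * sin φ * sin θ)|)) =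
      (2 * π)⁻¹ * (Iic 3).indicator (fun r => r ^ 3 * exp (-r ^ 2 / 2)) r *
        |cos φ * cos (θ - φ)| := fun r hr φ => by
    have hsq : (r * cos φ) ^ 2 + (r * sin φ) ^ 2 = r ^ 2 := by
      rw [mul_pow, mul_pow, ← mul_add, cos_sq_add_sin_sq, mul_one]
    have hprod : r * cos φ * (r * cos φ * cos θ + r * sin φ * sin θ) =
        r ^ 2 * (cos φ * cos (θ - φ)) := by
      rw [cos_sub]; ring
    rw [hsq, hprod, abs_mul, abs_of_nonneg (sq_nonneg r), smul_eq_mul]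
    by_cases hr3 : r ≤ 3
    · rw [if_pos (by nlinarith), indicator_of_mem (mem_Iic.2 hr3)]
      ring
    · rw [if_neg (by nlinarith), indicator_of_notMem (by simpa using hr3)]
      ring
  rw [integral_prod_gaussianReal_zero_one, integral_eq_mul_of_polarCoord _ _ hpolar,
    integral_const_mul, setIntegral_Ioi_indicator_Iic_pow_three_mul_exp (by norm_num),
    (periodic_abs_cos_mul_cos_sub θ).setIntegral_Ioo_neg_pi_pi]
  congr 1
  norm_num
  ring

/-- For `a = (a₁, a₂)` a pair of independent standard normals and `θ ∈ ℝ`: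
`E[𝟙_{a₁² + a₂² ≤ 9} · |a₁ (a₁ cos θ + a₂ sin θ)|]
  = ((2 − 11 e^{−9/2})/(2π)) ∫₀^{2π} |cos φ cos(θ − φ)| dφ`, and this quantity is at least
`(2 − 11 e^{−9/2})/π`. -/
theorem stmt_12 (θ : ℝ) :
    (∫ a : ℝ × ℝ,
        (if a.1 ^ 2 + a.2 ^ 2 ≤ 9 then (1:ℝ) else 0) *
          |a.1 * (a.1 * Real.cos θ + a.2 * Real.sin θ)|
        ∂((gaussianReal 0 1).prod (gaussianReal 0 1))) =
      ((2 - 11 * Real.exp (-(9:ℝ) / 2)) / (2 * Real.pi)) *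
        ∫ φ in (0:ℝ)..(2 * Real.pi), |Real.cos φ * Real.cos (θ - φ)| ∧
    (2 - 11 * Real.exp (-(9:ℝ) / 2)) / Real.pi ≤
      ∫ a : ℝ × ℝ,
        (if a.1 ^ 2 + a.2 ^ 2 ≤ 9 then (1:ℝ) else 0) *
          |a.1 * (a.1 * Real.cos θ + a.2 * Real.sin θ)|
        ∂((gaussianReal 0 1).prod (gaussianReal 0 1)) := by
  have hE := integral_indicator_mul_abs_prod_gaussianReal θ
  refine ⟨hE, ?_⟩
  calc (2 - 11 * exp (-(9 : ℝ) / 2)) / π = (2 - 11 * exp (-9 / 2)) / (2 * π) * 2 := by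
        field_simp
    _ ≤ (2 - 11 * exp (-9 / 2)) / (2 * π) * ∫ φ in 0..2 * π, |cos φ * cos (θ - φ)| := by
        gcongr
        · exact (div_pos two_sub_eleven_mul_exp_pos (by positivity)).le
        · exact two_le_integral_abs_cos_mul_cos_sub θ
    _ = _ := hE.symm
end

section
/- Let x₀ ∈ ℝⁿ, let a₁,…,a_m ∈ ℝⁿ be vectors, let Ω ⊆ {1,…,m} with Ωᶜ = {1,…,m}\Ω nonempty, and write 𝟙_i = 𝟙_{|⟨a_i,x₀⟩| ≤ 3‖x₀‖₂}. Suppose (deterministically) that ‖(1/|Ωᶜ|) Σ_{i∈Ωᶜ} 𝟙_i · a_i a_iᵀ − I_{n×n}‖ ≤ 0.04. Let S = {i : ⟨a_i, x₀⟩·⟨a_i, h⟩ > 0}, and suppose g ∈ ℝᵐ and h ∈ ℝⁿ satisfy: g_i ≥ 0 for all i ∈ Ωᶜ, |⟨a_i, h⟩| ≤ g_i for all i ∈ Ωᶜ ∩ S, and λ ≥ (6/|Ωᶜ|)‖x₀‖₂. Then ⟨x₀, h⟩ − λ Σ_{i∈Ωᶜ} g_i ≤ −(1/|Ωᶜ|)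 Σ_{i∈Ωᶜ} 𝟙_i·|⟨a_i, x₀⟩|·|⟨a_i, h⟩| + 0.04·‖x₀‖₂·‖h‖₂. -/
open BigOperators

/-- The Euclidean norm on `ℝⁿ`. -/
noncomputable def norm2 {n : ℕ} (x : Fin n → ℝ) : ℝ := Real.sqrt (∑ j, x j ^ 2)

/-- The spectral (ℓ²-operator) norm of an `n × n` real matrix. -/
noncomputable def specNorm {n : ℕ} (M : Matrix (Fin n) (Fin n) ℝ) : ℝ :=
  ‖Matrix.toEuclideanCLM (𝕜 := ℝ) M‖

/-! The spectral bound gives `⟨x₀,h⟩ ≤ (1/|Ωᶜ|) ∑ 𝟙ᵢ ⟨aᵢ,x₀⟩⟨aᵢ,h⟩ + 0.04‖x₀‖‖h‖`. A term with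
`⟨aᵢ,x₀⟩⟨aᵢ,h⟩ ≤ 0` equals `-𝟙ᵢ |⟨aᵢ,x₀⟩||⟨aᵢ,h⟩|`; a positive one has `i ∈ S`, so it is at most
`-𝟙ᵢ |⟨aᵢ,x₀⟩||⟨aᵢ,h⟩| + 2 · 3‖x₀‖ · gᵢ`, and these excesses are paid for by `λ ∑ gᵢ`. -/

open Matrix

lemma norm2_eq_norm_toLp {n : ℕ} (x : Fin n → ℝ) :
    norm2 x = ‖WithLp.toLp 2 x‖ := by
  simp only [norm2, EuclideanSpace.norm_eq, Real.norm_eq_abs, sq_abs]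

lemma norm2_nonneg {n : ℕ} (x : Fin n → ℝ) : 0 ≤ norm2 x := Real.sqrt_nonneg _

lemma abs_dotProduct_mulVec_le {n : ℕ} (M : Matrix (Fin n) (Fin n) ℝ) (x y : Fin n → ℝ) :
    |x ⬝ᵥ M *ᵥ y| ≤ specNorm M * norm2 x * norm2 y := by
  rw [norm2_eq_norm_toLp, norm2_eq_norm_toLp, ← inner_toEuclideanCLM, mul_comm (specNorm M),
    mul_assoc]
  exact (abs_real_inner_le_norm _ _).trans
    (mul_le_mul_of_nonneg_left ((toEuclideanCLM (𝕜 := ℝ) M).le_opNorm _) (norm_nonneg _))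

lemma dotProduct_le_dotProduct_mulVec_add {n : ℕ} (B : Matrix (Fin n) (Fin n) ℝ) {ε : ℝ}
    (hB : specNorm (B - 1) ≤ ε) (x y : Fin n → ℝ) :
    x ⬝ᵥ y ≤ x ⬝ᵥ B *ᵥ y + ε * norm2 x * norm2 y := by
  have hdev : |x ⬝ᵥ (B - 1) *ᵥ y| ≤ ε * norm2 x * norm2 y :=
    (abs_dotProduct_mulVec_le _ x y).trans (by
      gcongr
      exacts [norm2_nonneg y, norm2_nonneg x])
  rw [sub_mulVec, one_mulVec, dotProduct_sub] at hdev
  linarith [neg_abs_le (x ⬝ᵥ B *ᵥ y - x ⬝ᵥ y)]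

lemma dotProduct_smul_sum_vecMulVec_mulVec {ι n R : Type*} [Fintype n] [CommSemiring R]
    (c : R) (s : Finset ι) (w : ι → R) (a : ι → n → R) (x y : n → R) :
    x ⬝ᵥ (c • ∑ i ∈ s, w i • vecMulVec (a i) (a i)) *ᵥ y
      = c * ∑ i ∈ s, w i * ((a i ⬝ᵥ x) * (a i ⬝ᵥ y)) := by
  simp only [smul_mulVec, sum_mulVec, vecMulVec_mulVec, dotProduct_smul, dotProduct_sum,
    op_smul_eq_smul, smul_eq_mul, Finset.mul_sum]
  refine Finset.sum_congr rfl fun i _ => ?_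
  rw [dotProduct_comm x]
  ring

lemma mul_le_neg_abs_mul_abs_add {p q g K : ℝ} (hp : |p| ≤ K) (hg : 0 ≤ g)
    (hq : 0 < p * q → |q| ≤ g) :
    p * q ≤ -(|p| * |q|) + 2 * K * g := by
  rcases lt_or_ge 0 (p * q) with hpos | hnonpos
  · have : |p| * |q| ≤ K * g := mul_le_mul hp (hq hpos) (abs_nonneg _) ((abs_nonneg _).trans hp)
    rw [← abs_mul, abs_of_pos hpos] at this ⊢
    linarith
  · rw [← abs_mul, abs_of_nonpos hnonpos]
    nlinarith [(abs_nonneg p).trans hp]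

lemma ite_abs_le_mul_le {p q g K : ℝ} (hK : 0 ≤ K) (hg : 0 ≤ g)
    (hq : 0 < p * q → |q| ≤ g) :
    (if |p| ≤ K then (1 : ℝ) else 0) * (p * q)
      ≤ -((if |p| ≤ K then (1 : ℝ) else 0) * (|p| * |q|)) + 2 * K * g := by
  split_ifs with hp
  · simpa only [one_mul] using mul_le_neg_abs_mul_abs_add hp hg hq
  · simp only [zero_mul, neg_zero, zero_add]
    positivity

lemma sum_ite_abs_le_mul_le {ι : Type*} (s : Finset ι) {p q g : ι → ℝ} {K : ℝ} (hK : 0 ≤ K)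
    (hg : ∀ i ∈ s, 0 ≤ g i) (hq : ∀ i ∈ s, 0 < p i * q i → |q i| ≤ g i) :
    ∑ i ∈ s, (if |p i| ≤ K then (1 : ℝ) else 0) * (p i * q i)
      ≤ -∑ i ∈ s, (if |p i| ≤ K then (1 : ℝ) else 0) * (|p i| * |q i|)
        + 2 * K * ∑ i ∈ s, g i := by
  rw [← Finset.sum_neg_distrib, Finset.mul_sum, ← Finset.sum_add_distrib]
  exact Finset.sum_le_sum fun i hi => ite_abs_le_mul_le hK (hg i hi) (hq i hi)

theorem stmt_19_general (n m : ℕ) (x₀ h : Fin n → ℝ) (a : Fin m → Fin n → ℝ)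
    (Ω : Finset (Fin m)) (g : Fin m → ℝ) (lam : ℝ)
    (hnorm : specNorm
        ((1 / (Ωᶜ.card : ℝ)) •
            (∑ i ∈ Ωᶜ,
              (if |∑ j, a i j * x₀ j| ≤ 3 * norm2 x₀ then (1:ℝ) else 0) •
                Matrix.vecMulVec (a i) (a i)) - 1) ≤ 0.04)
    (hg : ∀ i ∈ Ωᶜ, 0 ≤ g i)
    (hgS : ∀ i ∈ Ωᶜ, (∑ j, a i j * x₀ j) * (∑ j, a i j * h j) > 0 →
      |∑ j, a i j * h j| ≤ g i)
    (hlam : lam ≥ (6 / (Ωᶜ.card : ℝ)) * norm2 x₀) :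
    (∑ j, x₀ j * h j) - lam * ∑ i ∈ Ωᶜ, g i ≤
      -(1 / (Ωᶜ.card : ℝ)) *
          (∑ i ∈ Ωᶜ,
            (if |∑ j, a i j * x₀ j| ≤ 3 * norm2 x₀ then (1:ℝ) else 0) *
              (|∑ j, a i j * x₀ j| * |∑ j, a i j * h j|)) +
        0.04 * norm2 x₀ * norm2 h := by
  have hquad := dotProduct_le_dotProduct_mulVec_add _ hnorm x₀ h
  rw [dotProduct_smul_sum_vecMulVec_mulVec] at hquad
  simp only [dotProduct] at hquad
  have hsum :=
    sum_ite_abs_le_mul_le Ωᶜ (K := 3 * norm2 x₀) (by positivity [norm2_nonneg x₀]) hg hgS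
  have hscaled := mul_le_mul_of_nonneg_left hsum (by positivity : 0 ≤ 1 / (Ωᶜ.card : ℝ))
  have hlam_sum := mul_le_mul_of_nonneg_right hlam (Finset.sum_nonneg hg)
  linear_combination hquad + hscaled + hlam_sum

/-- Deterministic bound on term `I` in the proof of the main theorem.  With
`𝟙ᵢ = 𝟙_{|⟨aᵢ,x₀⟩| ≤ 3‖x₀‖₂}`, if `‖(1/|Ωᶜ|) ∑_{i∈Ωᶜ} 𝟙ᵢ aᵢ aᵢᵀ − I‖ ≤ 0.04`,
`S = {i : ⟨aᵢ,x₀⟩⟨aᵢ,h⟩ > 0}`, `gᵢ ≥ 0` on `Ωᶜ`, `|⟨aᵢ,h⟩| ≤ gᵢ` on `Ωᶜ ∩ S`, and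
`λ ≥ (6/|Ωᶜ|)‖x₀‖₂`, then
`⟨x₀,h⟩ − λ ∑_{i∈Ωᶜ} gᵢ ≤ −(1/|Ωᶜ|) ∑_{i∈Ωᶜ} 𝟙ᵢ |⟨aᵢ,x₀⟩||⟨aᵢ,h⟩| + 0.04‖x₀‖₂‖h‖₂`. -/
theorem stmt_19 (n m : ℕ) (x₀ h : Fin n → ℝ) (a : Fin m → Fin n → ℝ)
    (Ω : Finset (Fin m)) (hΩc : Ωᶜ.Nonempty) (g : Fin m → ℝ) (lam : ℝ)
    (hnorm : specNorm
        ((1 / (Ωᶜ.card : ℝ)) •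
            (∑ i ∈ Ωᶜ,
              (if |∑ j, a i j * x₀ j| ≤ 3 * norm2 x₀ then (1:ℝ) else 0) •
                Matrix.vecMulVec (a i) (a i)) - 1) ≤ 0.04)
    (hg : ∀ i ∈ Ωᶜ, 0 ≤ g i)
    (hgS : ∀ i ∈ Ωᶜ, (∑ j, a i j * x₀ j) * (∑ j, a i j * h j) > 0 →
      |∑ j, a i j * h j| ≤ g i)
    (hlam : lam ≥ (6 / (Ωᶜ.card : ℝ)) * norm2 x₀) :
    (∑ j, x₀ j * h j) - lam * ∑ i ∈ Ωᶜ, g i ≤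
      -(1 / (Ωᶜ.card : ℝ)) *
          (∑ i ∈ Ωᶜ,
            (if |∑ j, a i j * x₀ j| ≤ 3 * norm2 x₀ then (1:ℝ) else 0) *
              (|∑ j, a i j * x₀ j| * |∑ j, a i j * h j|)) +
        0.04 * norm2 x₀ * norm2 h :=
  stmt_19_general n m x₀ h a Ω g lam hnorm hg hgS hlam
end
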